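/- If a modal formula A is valid on every IL_set-frame, then IL ⊢ A. (Completeness of IL with respect to generalized Veltman semantics, obtained by transferring ordinary Veltman completeness: from every IL-model M = ⟨W,R,S,⊩⟩ one constructs an IL_set-model M' = ⟨W,R,S',⊩'⟩ with S' = {(w,x,Y) : ∀y∈Y, xS_wy}, and every world satisfies the same formulas in M and M'.) -/

import Mathlib

/-- Modal formulas of interpretability logic: atoms, ⊥, →, □, ▷. -/
inductive Fm : Type
  | atom : ℕ → Fm
  | bot : Fm
  | imp : Fm → Fm → Fm
  | box : Fm → Fm
  | rhd : Fm → Fm → Fm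
deriving DecidableEq

namespace Fm
def neg (A : Fm) : Fm := .imp A .bot
def conj (A B : Fm) : Fm := neg (.imp A (neg B))
def disj (A B : Fm) : Fm := .imp (neg A) B
def dia (A : Fm) : Fm := neg (.box (neg A))
end Fm

/-- `f` is a boolean propositional evaluation (treats □ and ▷ formulas as atoms). -/
def PropEval (f : Fm → Bool) : Prop :=
  f Fm.bot = false ∧ ∀ A B, f (Fm.imp A B) = (!(f A) || f B)

/-- Propositional tautology. -/
def Taut (A : Fm) : Prop := ∀ f, PropEval f → f A = true

/-- Derivability in the interpretability logic IL extended with extra axioms `X`. -/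
inductive Prov (X : Fm → Prop) : Fm → Prop
  | taut {A} : Taut A → Prov X A
  | extra {A} : X A → Prov X A
  | l1 (A B) : Prov X (.imp (.box (.imp A B)) (.imp (.box A) (.box B)))
  | l2 (A) : Prov X (.imp (.box A) (.box (.box A)))
  | l3 (A) : Prov X (.imp (.box (.imp (.box A) A)) (.box A))
  | j1 (A B) : Prov X (.imp (.box (.imp A B)) (.rhd A B))
  | j2 (A B C) : Prov X (.imp (Fm.conj (.rhd A B) (.rhd B C)) (.rhd A C))
  | j3 (A B C) : Prov X (.imp (Fm.conj (.rhd A C) (.rhd B C)) (.rhd (Fm.disj A B) C))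
  | j4 (A B) : Prov X (.imp (.rhd A B) (.imp (Fm.dia A) (Fm.dia B)))
  | j5 (A) : Prov X (.rhd (Fm.dia A) A)
  | mp {A B} : Prov X (.imp A B) → Prov X A → Prov X B
  | nec {A} : Prov X A → Prov X (.box A)

/-- Derivability in plain IL. -/
def ILProv : Fm → Prop := Prov (fun _ => False)

/-- A Veltman frame (IL-frame). -/
structure VFrame where
  W : Type
  ne : Nonempty W
  R : W → W → Prop
  /-- `S x y z` means `y S_x z`. -/
  S : W → W → W → Prop
  R_trans : ∀ {x y z}, R x y → R y z → R x z
  R_cwf : WellFounded (fun x y => R y x)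
  S_R : ∀ {x y z}, S x y z → R x y ∧ R x z
  S_refl : ∀ {x y}, R x y → S x y y
  R_S : ∀ {x y z}, R x y → R y z → S x y z
  S_trans : ∀ {x u v w}, S x u v → S x v w → S x u w

structure VModel extends VFrame where
  val : W → ℕ → Prop

/-- Satisfaction on Veltman models. -/
def VSat (M : VModel) : M.W → Fm → Prop
  | w, .atom n => M.val w n
  | _, .bot => False
  | w, .imp A B => VSat M w A → VSat M w B
  | w, .box A => ∀ v, M.R w v → VSat M v A
  | w, .rhd A B => ∀ u, M.R w u → VSat M u A → ∃ v, M.S w u v ∧ VSat M v B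

/-- Validity on a Veltman frame. -/
def VFrame.Valid (F : VFrame) (A : Fm) : Prop :=
  ∀ val : F.W → ℕ → Prop, ∀ w : F.W, VSat { toVFrame := F, val := val } w A

/-- A generalized Veltman frame (ILset-frame). -/
structure GFrame where
  W : Type
  ne : Nonempty W
  R : W → W → Prop
  /-- `S w x Y` means `x S_w Y`. -/
  S : W → W → Set W → Prop
  R_trans : ∀ {x y z}, R x y → R y z → R x z
  R_cwf : WellFounded (fun x y => R y x)
  S_ne : ∀ {w x Y}, S w x Y → Y.Nonempty
  S_R : ∀ {w x Y}, S w x Y → R w x ∧ ∀ y ∈ Y, R w y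
  S_refl : ∀ {w x}, R w x → S w x {x}
  S_qtrans : ∀ {w x Y}, S w x Y → ∀ y ∈ Y, ∀ Z, y ∉ Z → S w y Z → S w x Z
  R_S : ∀ {w x y}, R w x → R x y → S w x {y}

structure GModel extends GFrame where
  val : W → ℕ → Prop

/-- Satisfaction on generalized Veltman models. -/
def GSat (M : GModel) : M.W → Fm → Prop
  | w, .atom n => M.val w n
  | _, .bot => False
  | w, .imp A B => GSat M w A → GSat M w B
  | w, .box A => ∀ v, M.R w v → GSat M v A
  | w, .rhd A B => ∀ x, M.R w x → GSat M x A →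
      ∃ Y, M.S w x Y ∧ ∀ y ∈ Y, GSat M y B

/-- Validity on a generalized Veltman frame. -/
def GFrame.Valid (F : GFrame) (A : Fm) : Prop :=
  ∀ val : F.W → ℕ → Prop, ∀ w : F.W, GSat { toGFrame := F, val := val } w A

/-- Instances of the principle M0. -/
def m0fm (A B C : Fm) : Fm :=
  .imp (.rhd A B) (.rhd (Fm.conj (Fm.dia A) (.box C)) (Fm.conj B (.box C)))

/-- Instances of the principle P0. -/
def p0fm (A B : Fm) : Fm := .imp (.rhd A (Fm.dia B)) (.box (.rhd A B))

/-- Instances of the principle R. -/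
def rfm (A B C : Fm) : Fm :=
  .imp (.rhd A B) (.rhd (Fm.neg (.rhd A (Fm.neg C))) (Fm.conj B (.box C)))

/-- Instances of the principle W. -/
def wfm (A B : Fm) : Fm :=
  .imp (.rhd A B) (.rhd A (Fm.conj B (.box (Fm.neg A))))

/-- Instances of the principle W*. -/
def wstarfm (A B C : Fm) : Fm :=
  .imp (.rhd A B)
    (.rhd (Fm.conj B (.box C)) (Fm.conj (Fm.conj B (.box C)) (.box (Fm.neg A))))

/-- Instances of the principle R*. -/
def rstarfm (A B C : Fm) : Fm :=
  .imp (.rhd A B)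
    (.rhd (Fm.neg (.rhd A (Fm.neg C))) (Fm.conj (Fm.conj B (.box C)) (.box (Fm.neg A))))

/-- The frame condition for M0 on generalized Veltman frames. -/
def GFrame.M0Cond (F : GFrame) : Prop :=
  ∀ w x y Y, F.R w x → F.R x y → F.S w y Y →
    ∃ Y', Y' ⊆ Y ∧ F.S w x Y' ∧ ∀ y' ∈ Y', ∀ z, F.R y' z → F.R x z

/-- The frame condition for P0 on generalized Veltman frames. -/
def GFrame.P0Cond (F : GFrame) : Prop :=
  ∀ w x y Y Z, F.R w x → F.R x y → F.S w y Y →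
    (∀ y' ∈ Y, ∃ z ∈ Z, F.R y' z) → ∃ Z', Z' ⊆ Z ∧ F.S x y Z'

/-- `Γ` is a choice set for `(w,x)`. -/
def GFrame.ChoiceSet (F : GFrame) (w x : F.W) (Γ : Set F.W) : Prop :=
  ∀ X, F.S w x X → (X ∩ Γ).Nonempty

/-- The frame condition for R on generalized Veltman frames. -/
def GFrame.RCond (F : GFrame) : Prop :=
  ∀ w x y Y, F.R w x → F.R x y → F.S w y Y →
    ∀ Γ, F.ChoiceSet x y Γ →
      ∃ Y', Y' ⊆ Y ∧ F.S w x Y' ∧ ∀ y' ∈ Y', ∀ z, F.R y' z → z ∈ Γ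

namespace ILC
open Fm

lemma ilmp {a b : Fm} (h1 : ILProv (.imp a b)) (h2 : ILProv a) : ILProv b := Prov.mp h1 h2

lemma taut_k (a b : Fm) : ILProv (.imp a (.imp b a)) := by
  apply Prov.taut; intro f hf
  simp only [hf.2]; cases f a <;> cases f b <;> rfl

lemma taut_id (a : Fm) : ILProv (.imp a a) := by
  apply Prov.taut; intro f hf
  simp only [hf.2]; cases f a <;> rfl

lemma imp_trans {a b c : Fm} (h1 : ILProv (.imp a b)) (h2 : ILProv (.imp b c)) :
    ILProv (.imp a c) := by
  have t : ILProv (.imp (.imp a b) (.imp (.imp b c) (.imp a c))) := by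
    apply Prov.taut; intro f hf; simp only [hf.2]
    cases f a <;> cases f b <;> cases f c <;> rfl
  exact ilmp (ilmp t h1) h2

lemma taut_and_intro (a b : Fm) : ILProv (.imp a (.imp b (Fm.conj a b))) := by
  apply Prov.taut; intro f hf
  simp only [Fm.conj, Fm.neg, hf.2, hf.1]; cases f a <;> cases f b <;> rfl

lemma taut_and_left (a b : Fm) : ILProv (.imp (Fm.conj a b) a) := by
  apply Prov.taut; intro f hf
  simp only [Fm.conj, Fm.neg, hf.2, hf.1]; cases f a <;> cases f b <;> rfl

lemma taut_and_right (a b : Fm) : ILProv (.imp (Fm.conj a b) b) := by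
  apply Prov.taut; intro f hf
  simp only [Fm.conj, Fm.neg, hf.2, hf.1]; cases f a <;> cases f b <;> rfl

lemma taut_curry (a b c : Fm) :
    ILProv (.imp (.imp (Fm.conj a b) c) (.imp a (.imp b c))) := by
  apply Prov.taut; intro f hf
  simp only [Fm.conj, Fm.neg, hf.2, hf.1]; cases f a <;> cases f b <;> cases f c <;> rfl

lemma taut_s (x a b : Fm) :
    ILProv (.imp (.imp x (.imp a b)) (.imp (.imp x a) (.imp x b))) := by
  apply Prov.taut; intro f hf
  simp only [hf.2]; cases f x <;> cases f a <;> cases f b <;> rfl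

lemma taut_efq (a c : Fm) : ILProv (.imp (Fm.neg a) (.imp a c)) := by
  apply Prov.taut; intro f hf
  simp only [Fm.neg, hf.2, hf.1]; cases f a <;> cases f c <;> rfl

lemma taut_dne (a : Fm) : ILProv (.imp (Fm.neg (Fm.neg a)) a) := by
  apply Prov.taut; intro f hf
  simp only [Fm.neg, hf.2, hf.1]; cases f a <;> rfl

lemma taut_contra (p q : Fm) :
    ILProv (.imp (.imp p q) (.imp (Fm.neg q) (Fm.neg p))) := by
  apply Prov.taut; intro f hf
  simp only [Fm.neg, hf.2, hf.1]; cases f p <;> cases f q <;> rfl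

/-- combine two implications into one with conj target -/
lemma imp_and {x a b : Fm} (h1 : ILProv (.imp x a)) (h2 : ILProv (.imp x b)) :
    ILProv (.imp x (Fm.conj a b)) := by
  have t : ILProv (.imp (.imp x a) (.imp (.imp x b) (.imp x (Fm.conj a b)))) := by
    apply Prov.taut; intro f hf
    simp only [Fm.conj, Fm.neg, hf.2, hf.1]
    cases f x <;> cases f a <;> cases f b <;> rfl
  exact ilmp (ilmp t h1) h2

/-! ### conjunction lists -/

def conjL (L : List Fm) : Fm := L.foldr Fm.conj (Fm.neg Fm.bot)

lemma conj_elim {b : Fm} : ∀ {L : List Fm}, b ∈ L → ILProv (.imp (conjL L) b)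
  | a :: L, h => by
    rcases List.mem_cons.1 h with h | h
    · subst h; exact taut_and_left _ _
    · exact imp_trans (taut_and_right a (conjL L)) (conj_elim h)

lemma conj_intro {c : Fm} : ∀ {L : List Fm}, (∀ b ∈ L, ILProv (.imp c b)) →
    ILProv (.imp c (conjL L))
  | [], _ => by
      have hnb : ILProv (conjL []) := by
        apply Prov.taut; intro f hf; simp only [conjL, List.foldr, Fm.neg, hf.2, hf.1]; rfl
      exact ilmp (taut_k (conjL []) c) hnb
  | a :: L, h => by
    exact imp_and (h a (List.mem_cons_self))
      (conj_intro (fun b hb => h b (List.mem_cons_of_mem a hb)))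

/-! ### theories -/

def Thy (S : Set Fm) (X : Fm) : Prop :=
  ∃ L : List Fm, (∀ b ∈ L, b ∈ S) ∧ ILProv (.imp (conjL L) X)

lemma thy_of_prov {S : Set Fm} {X : Fm} (h : ILProv X) : Thy S X :=
  ⟨[], by simp, ilmp (taut_k _ _) h⟩

lemma thy_of_mem {S : Set Fm} {X : Fm} (h : X ∈ S) : Thy S X :=
  ⟨[X], by simpa using h, conj_elim List.mem_cons_self⟩

lemma thy_mono {S S' : Set Fm} {X : Fm} (hss : S ⊆ S') (h : Thy S X) : Thy S' X := by
  obtain ⟨L, hL, hp⟩ := h; exact ⟨L, fun b hb => hss (hL b hb), hp⟩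

lemma thy_mp {S : Set Fm} {X Y : Fm} (h1 : Thy S (.imp X Y)) (h2 : Thy S X) : Thy S Y := by
  obtain ⟨L1, hL1, hp1⟩ := h1
  obtain ⟨L2, hL2, hp2⟩ := h2
  refine ⟨L1 ++ L2, ?_, ?_⟩
  · intro b hb; rcases List.mem_append.1 hb with h | h
    · exact hL1 b h
    · exact hL2 b h
  · have e1 : ILProv (.imp (conjL (L1 ++ L2)) (conjL L1)) :=
      conj_intro (fun b hb => conj_elim (List.mem_append_left _ hb))
    have e2 : ILProv (.imp (conjL (L1 ++ L2)) (conjL L2)) :=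
      conj_intro (fun b hb => conj_elim (List.mem_append_right _ hb))
    have hxy : ILProv (.imp (conjL (L1 ++ L2)) (.imp X Y)) := imp_trans e1 hp1
    have hx : ILProv (.imp (conjL (L1 ++ L2)) X) := imp_trans e2 hp2
    exact ilmp (ilmp (taut_s _ _ _) hxy) hx

/-- cut a finite list out of a theory -/
lemma thy_cut {S : Set Fm} {L : List Fm} (h : Thy (S ∪ {b | b ∈ L}) Fm.bot) :
    Thy S (Fm.neg (conjL L)) := by
  classical
  obtain ⟨L', hL', hp⟩ := h
  refine ⟨L'.filter (fun b => ¬ b ∈ L), ?_, ?_⟩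
  · intro b hb
    have := List.mem_filter.1 hb
    rcases hL' b this.1 with h | h
    · exact h
    · exact absurd h (by simpa using this.2)
  · set L'' := L'.filter (fun b => ¬ b ∈ L) with hL''
    have key : ILProv (.imp (Fm.conj (conjL L'') (conjL L)) (conjL L')) := by
      apply conj_intro
      intro b hb
      by_cases hbL : b ∈ L
      · exact imp_trans (taut_and_right _ _) (conj_elim hbL)
      · refine imp_trans (taut_and_left _ _) (conj_elim ?_)
        exact List.mem_filter.2 ⟨hb, by simpa using hbL⟩
    have : ILProv (.imp (Fm.conj (conjL L'') (conjL L)) Fm.bot) := imp_trans key hp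
    exact ilmp (taut_curry _ _ _) this

/-! ### maximal consistent sets -/

def Con (S : Set Fm) : Prop := ¬ Thy S Fm.bot

def MCS (S : Set Fm) : Prop := Con S ∧ ∀ B : Fm, B ∈ S ∨ Fm.neg B ∈ S

lemma mcs_thy {S : Set Fm} (h : MCS S) {B : Fm} (hB : Thy S B) : B ∈ S := by
  rcases h.2 B with hb | hb
  · exact hb
  · exact absurd (thy_mp (thy_of_mem hb) hB) h.1

lemma mcs_not_mem {S : Set Fm} (h : MCS S) {B : Fm} (hB : Fm.neg B ∈ S) : B ∉ S := by
  intro hb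
  exact h.1 (thy_mp (thy_of_mem hB) (thy_of_mem hb))

lemma mcs_neg_of_not_mem {S : Set Fm} (h : MCS S) {B : Fm} (hB : B ∉ S) : Fm.neg B ∈ S := by
  rcases h.2 B with hb | hb
  · exact absurd hb hB
  · exact hb

lemma mcs_bot_not_mem {S : Set Fm} (h : MCS S) : Fm.bot ∉ S := fun hb => h.1 (thy_of_mem hb)

lemma mcs_imp_mem {S : Set Fm} (h : MCS S) {B C : Fm} :
    Fm.imp B C ∈ S ↔ (B ∈ S → C ∈ S) := by
  constructor
  · intro hi hb; exact mcs_thy h (thy_mp (thy_of_mem hi) (thy_of_mem hb))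
  · intro hbc
    by_cases hb : B ∈ S
    · exact mcs_thy h (thy_mp (thy_of_prov (taut_k _ _)) (thy_of_mem (hbc hb)))
    · exact mcs_thy h (thy_mp (thy_of_prov (taut_efq _ _)) (thy_of_mem (mcs_neg_of_not_mem h hb)))

lemma taut_neg_single (b : Fm) :
    ILProv (.imp (Fm.neg (Fm.conj b (Fm.neg Fm.bot))) (Fm.neg b)) := by
  apply Prov.taut; intro f hf
  simp only [Fm.conj, Fm.neg, hf.2, hf.1]; cases f b <;> rfl

lemma con_insert_neg {S : Set Fm} {B : Fm} (h : ¬ Con (insert B S)) : Thy S (Fm.neg B) := by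
  simp only [Con, not_not] at h
  have h' : Thy (S ∪ {b | b ∈ [B]}) Fm.bot := by
    refine thy_mono ?_ h
    intro x hx
    rcases Set.mem_insert_iff.1 hx with rfl | hx
    · exact Or.inr (by simp)
    · exact Or.inl hx
  have := thy_cut h'
  exact thy_mp (thy_of_prov (taut_neg_single B)) this

lemma chain_list {c : Set (Set Fm)} (hc : IsChain (· ⊆ ·) c) (hne : c.Nonempty) :
    ∀ L : List Fm, (∀ b ∈ L, b ∈ ⋃₀ c) → ∃ t ∈ c, ∀ b ∈ L, b ∈ t := by
  intro L
  induction L with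
  | nil => exact fun _ => ⟨hne.choose, hne.choose_spec, by simp⟩
  | cons a L ih =>
    intro h
    obtain ⟨t1, ht1, hL⟩ := ih (fun b hb => h b (List.mem_cons_of_mem a hb))
    obtain ⟨t2, ht2, ha⟩ := h a List.mem_cons_self
    by_cases he : t1 = t2
    · exact ⟨t1, ht1, fun b hb => by
        rcases List.mem_cons.1 hb with rfl | hb
        · exact he ▸ ha
        · exact hL b hb⟩
    rcases hc.total ht1 ht2 with hsub | hsub
    · exact ⟨t2, ht2, fun b hb => by
        rcases List.mem_cons.1 hb with rfl | hb
        · exact ha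
        · exact hsub (hL b hb)⟩
    · exact ⟨t1, ht1, fun b hb => by
        rcases List.mem_cons.1 hb with rfl | hb
        · exact hsub ha
        · exact hL b hb⟩

/-- Lindenbaum -/
lemma lindenbaum {S : Set Fm} (h : Con S) : ∃ T, S ⊆ T ∧ MCS T := by
  have hz : ∀ c ⊆ {S' : Set Fm | Con S'}, IsChain (· ⊆ ·) c → c.Nonempty →
      ∃ ub ∈ {S' : Set Fm | Con S'}, ∀ s ∈ c, s ⊆ ub := by
    intro c hcS hchain hcne
    have hcon : Con (⋃₀ c) := by
      rintro ⟨L, hL, hp⟩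
      obtain ⟨t, htc, ht⟩ := chain_list hchain hcne L hL
      exact hcS htc ⟨L, ht, hp⟩
    exact ⟨⋃₀ c, hcon, fun s hs => Set.subset_sUnion_of_mem hs⟩
  obtain ⟨M, hSM, hM⟩ := zorn_subset_nonempty {S' | Con S'} hz S h
  refine ⟨M, hSM, hM.prop, ?_⟩
  intro B
  by_contra hc
  push_neg at hc
  have h1 : ¬ Con (insert B M) := by
    intro hcon
    exact hc.1 (hM.2 hcon (Set.subset_insert _ _) (Set.mem_insert _ _))
  have h2 : ¬ Con (insert (Fm.neg B) M) := by
    intro hcon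
    exact hc.2 (hM.2 hcon (Set.subset_insert _ _) (Set.mem_insert _ _))
  exact hM.prop (thy_mp (con_insert_neg h2) (con_insert_neg h1))


/-! ### derived modal rules -/

lemma ilmp2 {a b c : Fm} (h : ILProv (.imp a (.imp b c))) (h1 : ILProv a) (h2 : ILProv b) :
    ILProv c := ilmp (ilmp h h1) h2

lemma box_mono {a b : Fm} (h : ILProv (.imp a b)) : ILProv (.imp (.box a) (.box b)) :=
  ilmp (Prov.l1 a b) (Prov.nec h)

lemma box_pair (a b : Fm) : ILProv (.imp (.box a) (.imp (.box b) (.box (Fm.conj a b)))) := by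
  have h1 : ILProv (.imp (.box a) (.box (.imp b (Fm.conj a b)))) := box_mono (taut_and_intro a b)
  exact imp_trans h1 (Prov.l1 b (Fm.conj a b))

lemma j2' (a b c : Fm) : ILProv (.imp (.rhd a b) (.imp (.rhd b c) (.rhd a c))) :=
  ilmp (taut_curry _ _ _) (Prov.j2 a b c)

lemma j3' (a b c : Fm) : ILProv (.imp (.rhd a c) (.imp (.rhd b c) (.rhd (Fm.disj a b) c))) :=
  ilmp (taut_curry _ _ _) (Prov.j3 a b c)

lemma rhd_of_imp {a b : Fm} (h : ILProv (.imp a b)) : ILProv (.rhd a b) :=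
  ilmp (Prov.j1 a b) (Prov.nec h)

lemma rhd_refl (a : Fm) : ILProv (.rhd a a) := rhd_of_imp (taut_id a)

lemma taut_bot_elim (c : Fm) : ILProv (.imp Fm.bot c) := by
  apply Prov.taut; intro f hf; simp only [hf.2, hf.1]; rfl

lemma taut_notbot : ILProv (Fm.neg Fm.bot) := by
  apply Prov.taut; intro f hf; simp only [Fm.neg, hf.2, hf.1]; rfl

/-- `A ▷ (A ∧ □¬A)` -/
lemma rhd_to_crit (a : Fm) :
    ILProv (.rhd a (Fm.conj a (.box (Fm.neg a)))) := by
  set X := Fm.conj a (.box (Fm.neg a)) with hX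
  have h1 : ILProv (.imp (Fm.neg X) (.imp (.box (Fm.neg a)) (Fm.neg a))) := by
    rw [hX]; apply Prov.taut; intro f hf
    simp only [Fm.conj, Fm.neg, hf.2, hf.1]
    cases f a <;> cases f (Fm.box (Fm.imp a Fm.bot)) <;> rfl
  have h3 : ILProv (.imp (.box (Fm.neg X)) (.box (Fm.neg a))) :=
    imp_trans (box_mono h1) (Prov.l3 (Fm.neg a))
  have h4 : ILProv (.imp (Fm.neg (.box (Fm.neg a))) (Fm.neg (.box (Fm.neg X)))) :=
    ilmp (taut_contra _ _) h3
  have h5 : ILProv (.imp (.imp (Fm.neg (.box (Fm.neg a))) (Fm.neg (.box (Fm.neg X))))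
      (.imp a (Fm.disj X (Fm.dia X)))) := by
    rw [hX]; apply Prov.taut; intro f hf
    simp only [Fm.conj, Fm.disj, Fm.dia, Fm.neg, hf.2, hf.1]
    cases f a <;> cases f (Fm.box (Fm.imp a Fm.bot)) <;>
      cases f (Fm.box (Fm.imp (Fm.imp (Fm.imp a (Fm.imp (Fm.box (Fm.imp a Fm.bot)) Fm.bot)) Fm.bot) Fm.bot)) <;> rfl
  have h6 : ILProv (.rhd a (Fm.disj X (Fm.dia X))) := rhd_of_imp (ilmp h5 h4)
  have h7 : ILProv (.rhd (Fm.disj X (Fm.dia X)) X) :=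
    ilmp2 (j3' X (Fm.dia X) X) (rhd_refl X) (Prov.j5 X)
  exact ilmp2 (j2' _ _ _) h6 h7

/-- `(A ▷ ⊥) → □¬A` -/
lemma rhd_bot_boxneg (a : Fm) : ILProv (.imp (.rhd a Fm.bot) (.box (Fm.neg a))) := by
  have hj := Prov.j4 (X := fun _ => False) a Fm.bot
  have hnb : ILProv (.box (Fm.neg Fm.bot)) := Prov.nec taut_notbot
  have t : ILProv (.imp (.imp (.rhd a Fm.bot) (.imp (Fm.dia a) (Fm.dia Fm.bot)))
      (.imp (.box (Fm.neg Fm.bot)) (.imp (.rhd a Fm.bot) (.box (Fm.neg a))))) := by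
    apply Prov.taut; intro f hf
    simp only [Fm.dia, Fm.neg, hf.2, hf.1]
    cases f (Fm.rhd a Fm.bot) <;> cases f (Fm.box (Fm.imp a Fm.bot)) <;>
      cases f (Fm.box (Fm.imp Fm.bot Fm.bot)) <;> rfl
  exact ilmp2 t hj hnb

/-! ### Thy-level helpers -/

lemma thy_mp2 {T : Set Fm} {a b c : Fm} (h : ILProv (.imp a (.imp b c)))
    (h1 : Thy T a) (h2 : Thy T b) : Thy T c :=
  thy_mp (thy_mp (thy_of_prov h) h1) h2

lemma thy_imp {T : Set Fm} {a b : Fm} (h : ILProv (.imp a b)) (h1 : Thy T a) : Thy T b :=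
  thy_mp (thy_of_prov h) h1

/-- boxed content of a theory -/
def Sb (T : Set Fm) : Set Fm := {x | ∃ G, Fm.box G ∈ T ∧ (x = G ∨ x = Fm.box G)}

lemma box_conj_list {T : Set Fm} : ∀ {L : List Fm}, (∀ b ∈ L, Thy T (.box b)) →
    Thy T (.box (conjL L))
  | [], _ => thy_of_prov (Prov.nec taut_notbot)
  | a :: L, h => by
    exact thy_mp2 (box_pair a (conjL L)) (h a List.mem_cons_self)
      (box_conj_list (fun b hb => h b (List.mem_cons_of_mem a hb)))

lemma thy_boxed {T : Set Fm} {X : Fm} (h : Thy (Sb T) X) : Thy T (.box X) := by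
  obtain ⟨L, hL, hp⟩ := h
  have hbox : Thy T (.box (conjL L)) := by
    apply box_conj_list
    intro b hb
    obtain ⟨G, hG, hb⟩ := hL b hb
    rcases hb with rfl | rfl
    · exact thy_of_mem hG
    · exact thy_imp (Prov.l2 G) (thy_of_mem hG)
  exact thy_mp (thy_of_prov (box_mono hp)) hbox

/-! ### the disjunction lists -/

def DisL : List Fm → Fm
  | [] => Fm.bot
  | E :: Es => Fm.disj (Fm.disj E (Fm.dia E)) (DisL Es)

def CritL : List Fm → List Fm
  | [] => []
  | E :: Es => Fm.neg E :: Fm.box (Fm.neg E) :: CritL Es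

lemma taut_base (p bq : Fm) :
    ILProv (.imp (Fm.neg (Fm.conj p (Fm.conj bq (Fm.neg Fm.bot)))) (.imp (Fm.conj p bq) Fm.bot)) := by
  apply Prov.taut; intro f hf
  simp only [Fm.conj, Fm.neg, hf.2, hf.1]
  cases f p <;> cases f bq <;> rfl

lemma taut_step (p bq e c d : Fm) :
    ILProv (.imp
      (.imp (Fm.neg (Fm.conj p (Fm.conj bq c))) (.imp (Fm.conj p bq) d))
      (.imp (Fm.neg (Fm.conj p (Fm.conj bq (Fm.conj (Fm.neg e) (Fm.conj (Fm.box (Fm.neg e)) c)))))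
        (.imp (Fm.conj p bq) (Fm.disj (Fm.disj e (Fm.dia e)) d)))) := by
  apply Prov.taut; intro f hf
  simp only [Fm.conj, Fm.disj, Fm.dia, Fm.neg, hf.2, hf.1]
  cases f p <;> cases f bq <;> cases f e <;> cases f (Fm.box (Fm.imp e Fm.bot)) <;>
    cases f c <;> cases f d <;> rfl

lemma neg_conj_dis (p q : Fm) : ∀ Es : List Fm,
    ILProv (.imp (Fm.neg (conjL (p :: .box q :: CritL Es)))
      (.imp (Fm.conj p (.box q)) (DisL Es)))
  | [] => taut_base p (.box q)
  | E :: Es => ilmp (taut_step p (.box q) E (conjL (CritL Es)) (DisL Es)) (neg_conj_dis p q Es)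

lemma thy_disL {T : Set Fm} {Cs : Fm} : ∀ {Es : List Fm}, (∀ E ∈ Es, Fm.rhd E Cs ∈ T) →
    Thy T (.rhd (DisL Es) Cs)
  | [], _ => thy_of_prov (rhd_of_imp (taut_bot_elim Cs))
  | E :: Es, h => by
    have h1 : Thy T (.rhd E Cs) := thy_of_mem (h E List.mem_cons_self)
    have h2 : Thy T (.rhd (Fm.dia E) Cs) := thy_mp2 (j2' _ _ _) (thy_of_prov (Prov.j5 E)) h1
    have h3 : Thy T (.rhd (Fm.disj E (Fm.dia E)) Cs) := thy_mp2 (j3' _ _ _) h1 h2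
    exact thy_mp2 (j3' _ _ _) h3 (thy_disL (fun E' hE' => h E' (List.mem_cons_of_mem E hE')))

/-- critical extension set -/
def CritSet (T : Set Fm) (Cs : Fm) : Set Fm :=
  {x | ∃ E, Fm.rhd E Cs ∈ T ∧ (x = Fm.neg E ∨ x = Fm.box (Fm.neg E))}

/-- THE MAIN consistency computation -/
lemma main_consis {T : Set Fm} (p q Cs : Fm)
    (hext : Thy (Sb T ∪ {p, Fm.box q} ∪ CritSet T Cs) Fm.bot) :
    Thy T (.rhd (Fm.conj p (.box q)) Cs) := by
  obtain ⟨L, hL, hp⟩ := hext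
  -- extract the finitely many E's used
  have hEs : ∃ Es : List Fm, (∀ E ∈ Es, Fm.rhd E Cs ∈ T) ∧
      ∀ b ∈ L, b ∈ Sb T ∪ {b' | b' ∈ p :: Fm.box q :: CritL Es} := by
    clear hp
    induction L with
    | nil => exact ⟨[], by simp, by simp⟩
    | cons b L ih =>
      obtain ⟨Es, hEs1, hEs2⟩ := ih (fun x hx => hL x (List.mem_cons_of_mem b hx))
      rcases hL b List.mem_cons_self with (h | h) | h
      · exact ⟨Es, hEs1, fun x hx => by
          rcases List.mem_cons.1 hx with rfl | hx
          · exact Or.inl h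
          · exact hEs2 x hx⟩
      · refine ⟨Es, hEs1, fun x hx => ?_⟩
        rcases List.mem_cons.1 hx with rfl | hx
        · rcases h with rfl | h
          · exact Or.inr (by simp)
          · simp only [Set.mem_singleton_iff] at h; subst h; exact Or.inr (by simp)
        · exact hEs2 x hx
      · obtain ⟨E, hE, hform⟩ := h
        refine ⟨E :: Es, ?_, fun x hx => ?_⟩
        · intro E' hE'
          rcases List.mem_cons.1 hE' with rfl | hE'
          · exact hE
          · exact hEs1 E' hE'
        · rcases List.mem_cons.1 hx with rfl | hx
          · rcases hform with rfl | rfl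
            · exact Or.inr (by simp [CritL])
            · exact Or.inr (by simp [CritL])
          · rcases hEs2 x hx with h | h
            · exact Or.inl h
            · refine Or.inr ?_
              simp only [Set.mem_setOf_eq, List.mem_cons] at h ⊢
              rcases h with rfl | rfl | h
              · exact Or.inl rfl
              · exact Or.inr (Or.inl rfl)
              · exact Or.inr (Or.inr (by simp [CritL]; tauto))
  obtain ⟨Es, hEsT, hcover⟩ := hEs
  have hcut : Thy (Sb T) (Fm.neg (conjL (p :: Fm.box q :: CritL Es))) := by
    apply thy_cut
    exact ⟨L, hcover, hp⟩
  have himp : Thy (Sb T) (.imp (Fm.conj p (.box q)) (DisL Es)) :=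
    thy_mp (thy_of_prov (neg_conj_dis p q Es)) hcut
  have hbox : Thy T (.box (.imp (Fm.conj p (.box q)) (DisL Es))) := thy_boxed himp
  have hrhd : Thy T (.rhd (Fm.conj p (.box q)) (DisL Es)) :=
    thy_mp (thy_of_prov (Prov.j1 _ _)) hbox
  exact thy_mp2 (j2' _ _ _) hrhd (thy_disL hEsT)


/-! ### subformulas -/

def Sf : Fm → Finset Fm
  | .atom n => {.atom n}
  | .bot => {.bot}
  | .imp a b => insert (.imp a b) (Sf a ∪ Sf b)
  | .box a => insert (.box a) (Sf a)
  | .rhd a b => insert (.rhd a b) (Sf a ∪ Sf b)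

lemma mem_sf_self (A : Fm) : A ∈ Sf A := by
  cases A <;> simp [Sf]

lemma sf_closed : ∀ {A B : Fm}, B ∈ Sf A → Sf B ⊆ Sf A := by
  intro A
  induction A with
  | atom n => intro B hB; simp [Sf] at hB; subst hB; simp [Sf]
  | bot => intro B hB; simp [Sf] at hB; subst hB; simp [Sf]
  | imp a b iha ihb =>
    intro B hB
    rcases Finset.mem_insert.1 hB with rfl | hB
    · exact fun x hx => hx
    · rcases Finset.mem_union.1 hB with h | h
      · exact (iha h).trans (fun x hx => Finset.mem_insert_of_mem (Finset.mem_union_left _ hx))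
      · exact (ihb h).trans (fun x hx => Finset.mem_insert_of_mem (Finset.mem_union_right _ hx))
  | box a iha =>
    intro B hB
    rcases Finset.mem_insert.1 hB with rfl | hB
    · exact fun x hx => hx
    · exact (iha hB).trans (fun x hx => Finset.mem_insert_of_mem hx)
  | rhd a b iha ihb =>
    intro B hB
    rcases Finset.mem_insert.1 hB with rfl | hB
    · exact fun x hx => hx
    · rcases Finset.mem_union.1 hB with h | h
      · exact (iha h).trans (fun x hx => Finset.mem_insert_of_mem (Finset.mem_union_left _ hx))
      · exact (ihb h).trans (fun x hx => Finset.mem_insert_of_mem (Finset.mem_union_right _ hx))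

lemma sf_imp_left {A a b : Fm} (h : Fm.imp a b ∈ Sf A) : a ∈ Sf A :=
  sf_closed h (by simp [Sf, mem_sf_self])
lemma sf_imp_right {A a b : Fm} (h : Fm.imp a b ∈ Sf A) : b ∈ Sf A :=
  sf_closed h (by simp [Sf, mem_sf_self])
lemma sf_box {A a : Fm} (h : Fm.box a ∈ Sf A) : a ∈ Sf A :=
  sf_closed h (by simp [Sf, mem_sf_self])
lemma sf_rhd_left {A a b : Fm} (h : Fm.rhd a b ∈ Sf A) : a ∈ Sf A :=
  sf_closed h (by simp [Sf, mem_sf_self])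
lemma sf_rhd_right {A a b : Fm} (h : Fm.rhd a b ∈ Sf A) : b ∈ Sf A :=
  sf_closed h (by simp [Sf, mem_sf_self])

/-! ### the measure -/

def Dn (A0 : Fm) : Finset Fm := Sf A0 ∪ (Sf A0).image Fm.neg

lemma mem_dn_of_sf {A0 F : Fm} (h : F ∈ Sf A0) : F ∈ Dn A0 :=
  Finset.mem_union_left _ h
lemma mem_dn_neg {A0 F : Fm} (h : F ∈ Sf A0) : Fm.neg F ∈ Dn A0 :=
  Finset.mem_union_right _ (Finset.mem_image_of_mem _ h)

open Classical in
noncomputable def mu (A0 : Fm) (T : Set Fm) : ℕ :=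
  ((Dn A0).filter (fun F => Fm.box F ∉ T)).card

def prec (T U : Set Fm) : Prop := ∀ G : Fm, Fm.box G ∈ T → G ∈ U ∧ Fm.box G ∈ U

lemma mu_lt {A0 : Fm} {T U : Set Fm} (hp : prec T U) {F : Fm} (hF : F ∈ Dn A0)
    (hT : Fm.box F ∉ T) (hU : Fm.box F ∈ U) : mu A0 U < mu A0 T := by
  classical
  apply Finset.card_lt_card
  constructor
  · intro x hx
    simp only [Finset.mem_filter] at hx ⊢
    exact ⟨hx.1, fun hxT => hx.2 (hp x hxT).2⟩
  · intro hsub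
    have hFmem : F ∈ (Dn A0).filter (fun F => Fm.box F ∉ T) := by
      simp only [Finset.mem_filter]; exact ⟨hF, hT⟩
    have := hsub hFmem
    simp only [Finset.mem_filter] at this
    exact this.2 hU

/-! ### criticality, chains, worlds -/

def crit (T : Set Fm) (Cs : Fm) (U : Set Fm) : Prop :=
  ∀ E : Fm, Fm.rhd E Cs ∈ T → Fm.neg E ∈ U ∧ Fm.box (Fm.neg E) ∈ U

def Good (A0 : Fm) : Set Fm → List (Set Fm × Fm) → Prop
  | _, [] => True
  | T, (U, C) :: l => MCS U ∧ prec T U ∧ mu A0 U < mu A0 T ∧ crit T C U ∧ Good A0 U l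

structure Wd (A0 : Fm) where
  head : Set Fm
  tail : List (Set Fm × Fm)
  hhead : MCS head
  hgood : Good A0 head tail

def lastT : Set Fm → List (Set Fm × Fm) → Set Fm
  | T, [] => T
  | _, (U, _) :: l => lastT U l

def lastW {A0 : Fm} (w : Wd A0) : Set Fm := lastT w.head w.tail

lemma lastT_append : ∀ (l1 : List (Set Fm × Fm)) (l2 : List (Set Fm × Fm)) (T : Set Fm),
    lastT T (l1 ++ l2) = lastT (lastT T l1) l2 := by
  intro l1
  induction l1 with
  | nil => intro l2 T; rfl
  | cons e l ih => intro l2 T; cases e; exact ih l2 _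

lemma good_append {A0 : Fm} : ∀ (l1 l2 : List (Set Fm × Fm)) (T : Set Fm),
    Good A0 T (l1 ++ l2) ↔ Good A0 T l1 ∧ Good A0 (lastT T l1) l2 := by
  intro l1
  induction l1 with
  | nil => intro l2 T; simp [Good, lastT]
  | cons e l ih =>
    intro l2 T; cases e
    simp only [List.cons_append, Good, lastT, List.append_eq, ih, and_assoc]

lemma good_mcs_last {A0 : Fm} : ∀ (l : List (Set Fm × Fm)) (T : Set Fm),
    MCS T → Good A0 T l → MCS (lastT T l) := by
  intro l
  induction l with
  | nil => intro T h _; exact h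
  | cons e l ih => intro T h hg; cases e; exact ih _ hg.1 hg.2.2.2.2

lemma good_prec_box {A0 : Fm} : ∀ (l : List (Set Fm × Fm)) (T : Set Fm), Good A0 T l →
    ∀ G : Fm, Fm.box G ∈ T → Fm.box G ∈ lastT T l ∧ (l = [] ∨ G ∈ lastT T l) := by
  intro l
  induction l with
  | nil => intro T _ G hG; exact ⟨hG, Or.inl rfl⟩
  | cons e l ih =>
    intro T hg G hG; cases e with
    | mk U C =>
      have hU := hg.2.1 G hG
      have := ih U hg.2.2.2.2 G hU.2
      refine ⟨this.1, Or.inr ?_⟩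
      rcases this.2 with rfl | h
      · exact hU.1
      · rcases this.2 with h' | h'
        · subst h'; exact hU.1
        · exact h'

lemma good_mu_lt {A0 : Fm} : ∀ (l : List (Set Fm × Fm)) (T : Set Fm), Good A0 T l →
    l ≠ [] → mu A0 (lastT T l) < mu A0 T := by
  intro l
  induction l with
  | nil => intro T _ h; exact absurd rfl h
  | cons e l ih =>
    intro T hg _; cases e with
    | mk U C =>
      by_cases hl : l = []
      · subst hl; exact hg.2.2.1
      · exact lt_trans (ih U hg.2.2.2.2 hl) hg.2.2.1

lemma good_crit_last {A0 : Fm} {T U : Set Fm} {C : Fm} {l : List (Set Fm × Fm)}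
    (hc : crit T C U) (hg : Good A0 U l) : crit T C (lastT U l) := by
  intro E hE
  obtain ⟨h1, h2⟩ := hc E hE
  have := good_prec_box (A0 := A0) l U hg (Fm.neg E) h2
  rcases this.2 with rfl | h
  · exact ⟨h1, this.1⟩
  · exact ⟨h, this.1⟩

/-! ### accessibility -/

def Rw {A0 : Fm} (w u : Wd A0) : Prop :=
  u.head = w.head ∧ ∃ l', l' ≠ [] ∧ u.tail = w.tail ++ l'

def labAt {A0 : Fm} (w u : Wd A0) : Option Fm :=
  ((u.tail.drop w.tail.length).head?).map Prod.snd

lemma rw_trans {A0 : Fm} {w u v : Wd A0} (h1 : Rw w u) (h2 : Rw u v) : Rw w v := by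
  obtain ⟨hh1, l1, hl1, he1⟩ := h1
  obtain ⟨hh2, l2, hl2, he2⟩ := h2
  refine ⟨hh2.trans hh1, l1 ++ l2, by simp [hl1], ?_⟩
  rw [he2, he1, List.append_assoc]

lemma rw_good_last {A0 : Fm} {w u : Wd A0} (h : Rw w u) :
    ∃ l', l' ≠ [] ∧ Good A0 (lastW w) l' ∧ lastW u = lastT (lastW w) l' := by
  obtain ⟨hh, l', hl', he⟩ := h
  refine ⟨l', hl', ?_, ?_⟩
  · have := u.hgood
    rw [he, hh] at this
    exact ((good_append _ _ _).1 this).2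
  · show lastT u.head u.tail = _
    rw [he, hh, lastT_append]; rfl

lemma rw_mu_lt {A0 : Fm} {w u : Wd A0} (h : Rw w u) : mu A0 (lastW u) < mu A0 (lastW w) := by
  obtain ⟨l', hl', hg, he⟩ := rw_good_last h
  rw [he]
  exact good_mu_lt _ _ hg hl'

lemma rw_prec {A0 : Fm} {w u : Wd A0} (h : Rw w u) : prec (lastW w) (lastW u) := by
  obtain ⟨l', hl', hg, he⟩ := rw_good_last h
  intro G hG
  rw [he]
  cases l' with
  | nil => exact absurd rfl hl'
  | cons e l'' =>
    cases e with
    | mk U C =>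
      have hU := hg.2.1 G hG
      have := good_prec_box (A0 := A0) l'' U hg.2.2.2.2 G hU.2
      show G ∈ lastT U l'' ∧ Fm.box G ∈ lastT U l''
      rcases this.2 with rfl | hh
      · exact ⟨hU.1, this.1⟩
      · exact ⟨hh, this.1⟩

lemma rw_mcs_last {A0 : Fm} (w : Wd A0) : MCS (lastW w) :=
  good_mcs_last _ _ w.hhead w.hgood

lemma labAt_extend {A0 : Fm} {w u y : Wd A0} (h1 : Rw w u) (h2 : Rw u y) :
    labAt w y = labAt w u := by
  obtain ⟨hh1, l1, hl1, he1⟩ := h1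
  obtain ⟨hh2, l2, hl2, he2⟩ := h2
  unfold labAt
  rw [he2, he1, List.append_assoc, List.drop_left, List.drop_left]
  cases l1 with
  | nil => exact absurd rfl hl1
  | cons e l => rfl

lemma labAt_some {A0 : Fm} {w u : Wd A0} (h : Rw w u) : ∃ C, labAt w u = some C := by
  obtain ⟨hh, l', hl', he⟩ := h
  unfold labAt
  rw [he, List.drop_left]
  cases l' with
  | nil => exact absurd rfl hl'
  | cons e l => exact ⟨e.2, rfl⟩

lemma lab_crit {A0 : Fm} {w u : Wd A0} {C : Fm} (hR : Rw w u) (hlab : labAt w u = some C) :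
    crit (lastW w) C (lastW u) := by
  obtain ⟨hh, l', hl', he⟩ := hR
  have hgood : Good A0 (lastW w) l' := by
    have := u.hgood
    rw [he, hh] at this
    exact ((good_append _ _ _).1 this).2
  have hlast : lastW u = lastT (lastW w) l' := by
    show lastT u.head u.tail = _
    rw [he, hh, lastT_append]; rfl
  unfold labAt at hlab
  rw [he, List.drop_left] at hlab
  cases l' with
  | nil => exact absurd rfl hl'
  | cons e l'' =>
    cases e with
    | mk U C' =>
      simp only [List.head?, Option.map_some] at hlab
      have hC : C' = C := by simpa using hlab
      rw [hlast, ← hC]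
      show crit (lastW w) C' (lastT U l'')
      exact good_crit_last hgood.2.2.2.1 hgood.2.2.2.2

/-! ### S relation -/

def Sw {A0 : Fm} (w u : Wd A0) (Y : Set (Wd A0)) : Prop :=
  Rw w u ∧ Y.Nonempty ∧ ∀ y ∈ Y, Rw w y ∧ labAt w y = labAt w u

/-! ### constructing successors -/

lemma lastW_snoc {A0 : Fm} (w : Wd A0) (U : Set Fm) (C : Fm) (h1 : MCS w.head)
    (hg : Good A0 w.head (w.tail ++ [(U, C)])) :
    lastW (⟨w.head, w.tail ++ [(U, C)], h1, hg⟩ : Wd A0) = U := by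
  show lastT w.head (w.tail ++ [(U, C)]) = U
  rw [lastT_append]; rfl

lemma build_succ {A0 : Fm} (w : Wd A0) (p q Cs : Fm)
    (hq : q ∈ Dn A0) (hnb : Fm.box q ∉ lastW w)
    (hcon : Con (Sb (lastW w) ∪ {p, Fm.box q} ∪ CritSet (lastW w) Cs)) :
    ∃ u : Wd A0, Rw w u ∧ labAt w u = some Cs ∧ p ∈ lastW u := by
  obtain ⟨U, hsub, hU⟩ := lindenbaum hcon
  have hprec : prec (lastW w) U := by
    intro G hG
    exact ⟨hsub (Or.inl (Or.inl ⟨G, hG, Or.inl rfl⟩)),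
      hsub (Or.inl (Or.inl ⟨G, hG, Or.inr rfl⟩))⟩
  have hcrit : crit (lastW w) Cs U := by
    intro E hE
    exact ⟨hsub (Or.inr ⟨E, hE, Or.inl rfl⟩), hsub (Or.inr ⟨E, hE, Or.inr rfl⟩)⟩
  have hboxq : Fm.box q ∈ U := hsub (Or.inl (Or.inr (Or.inr rfl)))
  have hp : p ∈ U := hsub (Or.inl (Or.inr (Or.inl rfl)))
  have hmu : mu A0 U < mu A0 (lastW w) := mu_lt hprec hq hnb hboxq
  have hgood : Good A0 w.head (w.tail ++ [(U, Cs)]) := by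
    rw [good_append]
    exact ⟨w.hgood, hU, hprec, hmu, hcrit, trivial⟩
  refine ⟨⟨w.head, w.tail ++ [(U, Cs)], w.hhead, hgood⟩, ⟨rfl, [(U, Cs)], by simp, rfl⟩, ?_, ?_⟩
  · show (((w.tail ++ [(U, Cs)]).drop w.tail.length).head?).map Prod.snd = some Cs
    rw [List.drop_left]; rfl
  · rw [lastW_snoc]; exact hp

lemma taut_boxF (F : Fm) :
    ILProv (.imp (Fm.neg (Fm.conj (Fm.neg F) (.box F))) (.imp (.box F) F)) := by
  apply Prov.taut; intro f hf
  simp only [Fm.conj, Fm.neg, hf.2, hf.1]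
  cases f F <;> cases f (Fm.box F) <;> rfl

/-- successor for the box case -/
lemma exists_box_succ {A0 : Fm} (w : Wd A0) {F : Fm} (hF : F ∈ Sf A0)
    (hbox : Fm.box F ∉ lastW w) :
    ∃ u : Wd A0, Rw w u ∧ F ∉ lastW u := by
  have hmcs : MCS (lastW w) := rw_mcs_last w
  have hcon : Con (Sb (lastW w) ∪ {Fm.neg F, Fm.box F} ∪ CritSet (lastW w) Fm.bot) := by
    intro hthy
    have h1 : Thy (lastW w) (.rhd (Fm.conj (Fm.neg F) (.box F)) Fm.bot) :=
      main_consis (Fm.neg F) F Fm.bot hthy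
    have h2 : Thy (lastW w) (.box (Fm.neg (Fm.conj (Fm.neg F) (.box F)))) :=
      thy_mp (thy_of_prov (rhd_bot_boxneg _)) h1
    have h3 : Thy (lastW w) (.box (.imp (.box F) F)) :=
      thy_mp (thy_of_prov (box_mono (taut_boxF F))) h2
    have h4 : Thy (lastW w) (.box F) := thy_mp (thy_of_prov (Prov.l3 F)) h3
    exact hbox (mcs_thy hmcs h4)
  obtain ⟨u, hRu, _, hnF⟩ := build_succ w (Fm.neg F) F Fm.bot (mem_dn_of_sf hF) hbox hcon
  exact ⟨u, hRu, mcs_not_mem (rw_mcs_last u) hnF⟩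

/-- counterexample successor for an unprovable `B ▷ C` -/
lemma exists_rhd_cex {A0 : Fm} (w : Wd A0) {B C : Fm} (hB : B ∈ Sf A0)
    (hm : Fm.rhd B C ∉ lastW w) :
    ∃ u : Wd A0, Rw w u ∧ labAt w u = some C ∧ B ∈ lastW u := by
  have hmcs : MCS (lastW w) := rw_mcs_last w
  have hnb : Fm.box (Fm.neg B) ∉ lastW w := by
    intro hbb
    have h1 : Thy (lastW w) (.box (.imp B C)) :=
      thy_mp (thy_of_prov (box_mono (taut_efq B C))) (thy_of_mem hbb)
    exact hm (mcs_thy hmcs (thy_mp (thy_of_prov (Prov.j1 B C)) h1))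
  have hcon : Con (Sb (lastW w) ∪ {B, Fm.box (Fm.neg B)} ∪ CritSet (lastW w) C) := by
    intro hthy
    have h1 : Thy (lastW w) (.rhd (Fm.conj B (.box (Fm.neg B))) C) :=
      main_consis B (Fm.neg B) C hthy
    have h2 : Thy (lastW w) (.rhd B C) :=
      thy_mp2 (j2' B _ C) (thy_of_prov (rhd_to_crit B)) h1
    exact hm (mcs_thy hmcs h2)
  exact build_succ w B (Fm.neg B) C (mem_dn_neg hB) hnb hcon

/-- witness successor for a provable `B ▷ C` -/
lemma exists_rhd_wit {A0 : Fm} (w u : Wd A0) {B C Cs : Fm} (hC : C ∈ Sf A0)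
    (hBC : Fm.rhd B C ∈ lastW w) (hRu : Rw w u) (hBu : B ∈ lastW u)
    (hlab : labAt w u = some Cs) :
    ∃ v : Wd A0, Rw w v ∧ labAt w v = some Cs ∧ C ∈ lastW v := by
  have hmcs : MCS (lastW w) := rw_mcs_last w
  have hmcsu : MCS (lastW u) := rw_mcs_last u
  have hnbB : Fm.box (Fm.neg B) ∉ lastW w := by
    intro hbb
    have : Fm.neg B ∈ lastW u := (rw_prec hRu (Fm.neg B) hbb).1
    exact hmcsu.1 (thy_mp (thy_of_mem this) (thy_of_mem hBu))
  have hdiaB : Fm.dia B ∈ lastW w := mcs_neg_of_not_mem hmcs hnbB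
  have hdiaC : Fm.dia C ∈ lastW w := by
    apply mcs_thy hmcs
    exact thy_mp (thy_mp (thy_of_prov (Prov.j4 B C)) (thy_of_mem hBC)) (thy_of_mem hdiaB)
  have hnbC : Fm.box (Fm.neg C) ∉ lastW w := mcs_not_mem hmcs hdiaC
  have hcon : Con (Sb (lastW w) ∪ {C, Fm.box (Fm.neg C)} ∪ CritSet (lastW w) Cs) := by
    intro hthy
    have h1 : Thy (lastW w) (.rhd (Fm.conj C (.box (Fm.neg C))) Cs) :=
      main_consis C (Fm.neg C) Cs hthy
    have h2 : Thy (lastW w) (.rhd C Cs) :=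
      thy_mp2 (j2' C _ Cs) (thy_of_prov (rhd_to_crit C)) h1
    have h3 : Thy (lastW w) (.rhd B Cs) := thy_mp2 (j2' B C Cs) (thy_of_mem hBC) h2
    have hmem : Fm.rhd B Cs ∈ lastW w := mcs_thy hmcs h3
    have hcrit := lab_crit hRu hlab
    have := (hcrit B hmem).1
    exact hmcsu.1 (thy_mp (thy_of_mem this) (thy_of_mem hBu))
  exact build_succ w C (Fm.neg C) Cs (mem_dn_neg hC) hnbC hcon

/-! ### the canonical generalized frame -/

def Sw' {A0 : Fm} : Wd A0 → Wd A0 → Set (Wd A0) → Prop := Sw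

noncomputable def theFrame (A0 : Fm) (T0 : Set Fm) (h0 : MCS T0) : GFrame where
  W := Wd A0
  ne := ⟨⟨T0, [], h0, trivial⟩⟩
  R := Rw
  S := Sw
  R_trans := fun h1 h2 => rw_trans h1 h2
  R_cwf := Subrelation.wf (fun {x y} h => rw_mu_lt h)
    (InvImage.wf (fun w => mu A0 (lastW w)) (Nat.lt_wfRel.wf))
  S_ne := fun h => h.2.1
  S_R := fun h => ⟨h.1, fun y hy => (h.2.2 y hy).1⟩
  S_refl := fun hR => ⟨hR, ⟨_, rfl⟩, fun y hy => by
    rw [Set.mem_singleton_iff] at hy; subst hy; exact ⟨hR, rfl⟩⟩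
  S_qtrans := fun hS y hy Z _ hSZ =>
    ⟨hS.1, hSZ.2.1, fun z hz =>
      ⟨(hSZ.2.2 z hz).1, ((hSZ.2.2 z hz).2).trans (hS.2.2 y hy).2⟩⟩
  R_S := fun hwx hxy => ⟨hwx, ⟨_, rfl⟩, fun y hy => by
    rw [Set.mem_singleton_iff] at hy; subst hy
    exact ⟨rw_trans hwx hxy, labAt_extend hwx hxy⟩⟩

noncomputable def theModel (A0 : Fm) (T0 : Set Fm) (h0 : MCS T0) : GModel where
  toGFrame := theFrame A0 T0 h0
  val := fun w n => Fm.atom n ∈ lastW w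

/-! ### the truth lemma -/

lemma truth (A0 : Fm) (T0 : Set Fm) (h0 : MCS T0) : ∀ B : Fm, B ∈ Sf A0 →
    ∀ w : Wd A0, GSat (theModel A0 T0 h0) w B ↔ B ∈ lastW w := by
  intro B
  induction B with
  | atom n => intro _ w; exact Iff.rfl
  | bot =>
    intro _ w
    simp only [GSat]
    exact ⟨False.elim, fun h => mcs_bot_not_mem (rw_mcs_last w) h⟩
  | imp a b iha ihb =>
    intro hmem w
    simp only [GSat]
    rw [iha (sf_imp_left hmem) w, ihb (sf_imp_right hmem) w, mcs_imp_mem (rw_mcs_last w)]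
  | box a iha =>
    intro hmem w
    simp only [GSat]
    constructor
    · intro h
      by_contra hbox
      obtain ⟨u, hRu, hnot⟩ := exists_box_succ w (sf_box hmem) hbox
      exact hnot ((iha (sf_box hmem) u).1 (h u hRu))
    · intro h v hRv
      exact (iha (sf_box hmem) v).2 ((rw_prec hRv a h).1)
  | rhd a b iha ihb =>
    intro hmem w
    simp only [GSat]
    constructor
    · intro h
      by_contra hm
      obtain ⟨u, hRu, hlab, hBu⟩ := exists_rhd_cex w (sf_rhd_left hmem) hm
      obtain ⟨Y, hS, hY⟩ := h u hRu ((iha (sf_rhd_left hmem) u).2 hBu)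
      obtain ⟨y, hy⟩ := hS.2.1
      have hlaby : labAt w y = some b := by
        rw [(hS.2.2 y hy).2, hlab]
      have hcrity := lab_crit (hS.2.2 y hy).1 hlaby
      have hbb : Fm.rhd b b ∈ lastW w := mcs_thy (rw_mcs_last w) (thy_of_prov (rhd_refl b))
      have hbn : b ∉ lastW y := mcs_not_mem (rw_mcs_last y) (hcrity b hbb).1
      exact hbn ((ihb (sf_rhd_right hmem) y).1 (hY y hy))
    · intro h x hRx hsat
      have hBx := (iha (sf_rhd_left hmem) x).1 hsat
      obtain ⟨Cs, hlab⟩ := labAt_some hRx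
      obtain ⟨v, hRv, hlabv, hCv⟩ := exists_rhd_wit w x (sf_rhd_right hmem) h hRx hBx hlab
      refine ⟨{v}, ⟨hRx, ⟨v, rfl⟩, ?_⟩, ?_⟩
      · intro y hy; replace hy : y = v := hy; subst hy
        exact ⟨hRv, by rw [hlabv, hlab]⟩
      · intro y hy; replace hy : y = v := hy; subst hy
        exact (ihb (sf_rhd_right hmem) _).2 hCv

end ILC

/-- completeness of IL with respect to generalized Veltman frames. -/
theorem il_complete_gframe : ∀ A : Fm, (∀ F : GFrame, F.Valid A) → ILProv A := by
  intro A hval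
  by_contra hA
  have hcon : ILC.Con {Fm.neg A} := by
    rintro ⟨L, hL, hp⟩
    have hintro : ILProv (.imp (Fm.neg A) (ILC.conjL L)) := ILC.conj_intro (fun b hb => by
      have := hL b hb
      simp only [Set.mem_singleton_iff] at this
      subst this
      exact ILC.taut_id _)
    exact hA (ILC.ilmp (ILC.taut_dne A) (ILC.imp_trans hintro hp))
  obtain ⟨T0, hsub, h0⟩ := ILC.lindenbaum hcon
  have hv := hval (ILC.theFrame A T0 h0) (fun w n => Fm.atom n ∈ ILC.lastW w)
    ⟨T0, [], h0, trivial⟩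
  have hAT : A ∈ T0 :=
    (ILC.truth A T0 h0 A (ILC.mem_sf_self A) ⟨T0, [], h0, trivial⟩).1 hv
  exact h0.1 (ILC.thy_mp (ILC.thy_of_mem (hsub rfl)) (ILC.thy_of_mem hAT))
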